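/- arXiv:quant-ph/0505030 — 5 statements merged into one kernel-verified Lean document; each statement's English description precedes it below -/
import Mathlib

section
/- Suppose V, W, Ṽ, W̃ are unitary matrices with ‖V − Ṽ‖ < Δ, ‖W − W̃‖ < Δ, ‖I − V‖ < δ, and ‖I − W‖ < δ. Then ‖VWV†W† − ṼW̃Ṽ†W̃†‖ < 8Δδ + 4Δδ² + 8Δ² + 4Δ³ + Δ⁴. -/
/-!
Conjugation by a unitary moves `X` by at most `2‖U - U'‖‖1 - X‖` when `U` is replaced by a
nearby unitary `U'`, since `1` is fixed by every conjugation. Changing the commutator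
`V W V⋆ W⋆` first in `V` (conjugating `W`) and then in `W` (conjugating `V'⋆`) gives
`‖[V, W] - [V', W']‖ ≤ 2‖V - V'‖‖1 - W‖ + 2‖W - W'‖‖1 - V'‖ < 4Δδ + 2Δ²`.
-/

open scoped Matrix.Norms.L2Operator
open Matrix

section UnitaryConjugation

variable {E : Type*} [NormedRing E] [StarRing E] [CStarRing E]

theorem norm_unitary_conj_sub_le {U U' : E} (hU : U ∈ unitary E) (hU' : U' ∈ unitary E)
    (X : E) : ‖U * X * star U - U' * X * star U'‖ ≤ 2 * ‖U - U'‖ * ‖X‖ := by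
  have split : U * X * star U - U' * X * star U' =
      (U - U') * X * star U + U' * (X * star (U - U')) := by
    rw [star_sub]; noncomm_ring
  calc ‖U * X * star U - U' * X * star U'‖
      ≤ ‖(U - U') * X‖ + ‖X * star (U - U')‖ := by
        rw [split]
        refine (norm_add_le _ _).trans_eq ?_
        rw [CStarRing.norm_mul_mem_unitary _ (Unitary.star_mem hU), CStarRing.norm_mem_unitary_mul _ hU']
    _ ≤ ‖U - U'‖ * ‖X‖ + ‖X‖ * ‖U - U'‖ := by
        gcongr
        · exact norm_mul_le _ _
        · exact (norm_mul_le _ _).trans_eq (by rw [norm_star])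
    _ = 2 * ‖U - U'‖ * ‖X‖ := by ring

theorem norm_unitary_conj_sub_le_mul_norm_one_sub {U U' : E} (hU : U ∈ unitary E)
    (hU' : U' ∈ unitary E) (X : E) :
    ‖U * X * star U - U' * X * star U'‖ ≤ 2 * ‖U - U'‖ * ‖1 - X‖ := by
  have conj_eq : ∀ V ∈ unitary E, V * X * star V = 1 - V * (1 - X) * star V := by
    intro V hV
    rw [mul_sub, sub_mul, mul_one, Unitary.mul_star_self_of_mem hV, sub_sub_cancel]
  rw [conj_eq U hU, conj_eq U' hU', sub_sub_sub_cancel_left, norm_sub_rev U U']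
  exact norm_unitary_conj_sub_le hU' hU (1 - X)

theorem norm_unitary_commutator_sub_le {V W V' W' : E}
    (hV : V ∈ unitary E) (hW : W ∈ unitary E) (hV' : V' ∈ unitary E) (hW' : W' ∈ unitary E) :
    ‖V * W * star V * star W - V' * W' * star V' * star W'‖ ≤
      2 * ‖V - V'‖ * ‖1 - W‖ + 2 * ‖W - W'‖ * ‖1 - V'‖ := by
  have split : V * W * star V * star W - V' * W' * star V' * star W' =
      (V * W * star V - V' * W * star V') * star W +
        V' * (W * star V' * star W - W' * star V' * star W') := by
    noncomm_ring
  have one_sub_star : ‖1 - star V'‖ = ‖1 - V'‖ := by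
    rw [← norm_star (1 - V'), star_sub, star_one]
  calc ‖V * W * star V * star W - V' * W' * star V' * star W'‖
      ≤ ‖V * W * star V - V' * W * star V'‖ + ‖W * star V' * star W - W' * star V' * star W'‖ := by
        rw [split]
        refine (norm_add_le _ _).trans_eq ?_
        rw [CStarRing.norm_mul_mem_unitary _ (Unitary.star_mem hW), CStarRing.norm_mem_unitary_mul _ hV']
    _ ≤ 2 * ‖V - V'‖ * ‖1 - W‖ + 2 * ‖W - W'‖ * ‖1 - V'‖ := by
        rw [← one_sub_star]
        exact add_le_add (norm_unitary_conj_sub_le_mul_norm_one_sub hV hV' W)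
          (norm_unitary_conj_sub_le_mul_norm_one_sub hW hW' (star V'))

end UnitaryConjugation

theorem group_commutator_approx_general {d : ℕ}
    (V W V' W' : Matrix (Fin d) (Fin d) ℂ)
    (hV : V ∈ Matrix.unitaryGroup (Fin d) ℂ)
    (hW : W ∈ Matrix.unitaryGroup (Fin d) ℂ)
    (hV' : V' ∈ Matrix.unitaryGroup (Fin d) ℂ)
    (hW' : W' ∈ Matrix.unitaryGroup (Fin d) ℂ)
    (Δ δ : ℝ)
    (h1 : ‖V - V'‖ < Δ) (h2 : ‖W - W'‖ < Δ)
    (h3 : ‖(1 : Matrix (Fin d) (Fin d) ℂ) - V‖ < δ)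
    (h4 : ‖(1 : Matrix (Fin d) (Fin d) ℂ) - W‖ < δ) :
    ‖V * W * Vᴴ * Wᴴ - V' * W' * V'ᴴ * W'ᴴ‖ <
      8 * Δ * δ + 4 * Δ * δ ^ 2 + 8 * Δ ^ 2 + 4 * Δ ^ 3 + Δ ^ 4 := by
  have hV'_near_one : ‖1 - V'‖ < δ + Δ :=
    (norm_sub_le_norm_sub_add_norm_sub 1 V V').trans_lt (add_lt_add h3 h1)
  have hΔ : 0 < Δ := (norm_nonneg _).trans_lt h1
  have hδ : 0 < δ := (norm_nonneg _).trans_lt h3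
  calc ‖V * W * Vᴴ * Wᴴ - V' * W' * V'ᴴ * W'ᴴ‖
      ≤ 2 * ‖V - V'‖ * ‖1 - W‖ + 2 * ‖W - W'‖ * ‖1 - V'‖ :=
        norm_unitary_commutator_sub_le hV hW hV' hW'
    _ < 2 * Δ * δ + 2 * Δ * (δ + Δ) := by
        have hVW := mul_lt_mul'' h1 h4 (norm_nonneg _) (norm_nonneg _)
        have hWV' := mul_lt_mul'' h2 hV'_near_one (norm_nonneg _) (norm_nonneg _)
        linarith
    _ ≤ 8 * Δ * δ + 4 * Δ * δ ^ 2 + 8 * Δ ^ 2 + 4 * Δ ^ 3 + Δ ^ 4 := by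
        have : 0 ≤ 4 * Δ * δ + 4 * Δ * δ ^ 2 + 6 * Δ ^ 2 + 4 * Δ ^ 3 + Δ ^ 4 := by positivity
        linarith

theorem group_commutator_approx {d : ℕ}
    (V W V' W' : Matrix (Fin d) (Fin d) ℂ)
    (hV : V ∈ Matrix.unitaryGroup (Fin d) ℂ)
    (hW : W ∈ Matrix.unitaryGroup (Fin d) ℂ)
    (hV' : V' ∈ Matrix.unitaryGroup (Fin d) ℂ)
    (hW' : W' ∈ Matrix.unitaryGroup (Fin d) ℂ)
    (Δ δ : ℝ) (hΔ : 0 < Δ) (hδ : 0 < δ)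
    (h1 : ‖V - V'‖ < Δ) (h2 : ‖W - W'‖ < Δ)
    (h3 : ‖(1 : Matrix (Fin d) (Fin d) ℂ) - V‖ < δ)
    (h4 : ‖(1 : Matrix (Fin d) (Fin d) ℂ) - W‖ < δ) :
    ‖V * W * Vᴴ * Wᴴ - V' * W' * V'ᴴ * W'ᴴ‖ <
      8 * Δ * δ + 4 * Δ * δ ^ 2 + 8 * Δ ^ 2 + 4 * Δ ^ 3 + Δ ^ 4 :=
  group_commutator_approx_general V W V' W' hV hW hV' hW' Δ δ h1 h2 h3 h4
end

section
/- Let H be a traceless d×d Hermitian matrix. Then there exist Hermitian matrices F and G such that [F,G] = iH and ‖F‖, ‖G‖ ≤ d^{1/4} · ((d−1)/2)^{1/2} · √‖H‖. -/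
/-!
Diagonalise `H = U D U⋆` and conjugate `D` by the unitary discrete Fourier matrix `W`: every entry
of `W` has modulus `d^(-1/2)`, so each diagonal entry of `M = W⋆ D W` equals `trace H / d = 0`.
For a zero-diagonal Hermitian `M` and the real diagonal matrix `F₀ = diag(j - (d - 1)/2)`, the
equation `⁅F₀, G₀⁆ = I • M` is solved entrywise by `G₀ j k = I * M j k / (j - k)`, which is
Hermitian. Here `‖F₀‖ = (d - 1)/2`, while `‖G₀‖` is at most the Frobenius norm of `M`, hence at
most `√d * ‖M‖`. Rescaling `F₀` by `t` and `G₀` by `t⁻¹` balances the two bounds at their geometric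
mean, and conjugating back by `U W` preserves commutators and operator norms.
-/

open scoped Matrix.Norms.L2Operator
open Matrix Complex

namespace Matrix

section L2OpNorm

variable {𝕜 m n : Type*} [RCLike 𝕜] [Fintype m] [Fintype n] [DecidableEq n]

theorem l2_opNorm_le_sqrt_sum_norm_sq (A : Matrix m n 𝕜) :
    ‖A‖ ≤ √(∑ i, ∑ j, ‖A i j‖ ^ 2) := by
  rw [l2_opNorm_def]
  refine ContinuousLinearMap.opNorm_le_bound _ (Real.sqrt_nonneg _) fun x => ?_
  rw [EuclideanSpace.norm_eq, EuclideanSpace.norm_eq, ← Real.sqrt_mul (by positivity),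
    Finset.sum_mul]
  refine Real.sqrt_le_sqrt (Finset.sum_le_sum fun i _ => ?_)
  calc ‖(A *ᵥ x) i‖ ^ 2 ≤ (∑ j, ‖A i j‖ * ‖x j‖) ^ 2 := by
        gcongr
        exact (norm_sum_le _ _).trans_eq (by simp only [norm_mul])
    _ ≤ (∑ j, ‖A i j‖ ^ 2) * ∑ j, ‖x j‖ ^ 2 := Finset.sum_mul_sq_le_sq_mul_sq _ _ _

theorem sum_norm_sq_le_card_mul_l2_opNorm_sq (A : Matrix m n 𝕜) :
    ∑ i, ∑ j, ‖A i j‖ ^ 2 ≤ Fintype.card n * ‖A‖ ^ 2 := by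
  rw [Finset.sum_comm, ← nsmul_eq_mul, ← Finset.card_univ, ← Finset.sum_const]
  refine Finset.sum_le_sum fun j _ => ?_
  have hcol := A.l2_opNorm_mulVec (EuclideanSpace.single j 1)
  rw [PiLp.norm_single, norm_one, mul_one, EuclideanSpace.norm_eq] at hcol
  calc ∑ i, ‖A i j‖ ^ 2 = √(∑ i, ‖A i j‖ ^ 2) ^ 2 := (Real.sq_sqrt (by positivity)).symm
    _ ≤ ‖A‖ ^ 2 := by
      gcongr
      simpa [mulVec_single] using hcol

end L2OpNorm

theorem conjTranspose_mul_diagonal_mul_apply_self {𝕜 m n : Type*} [RCLike 𝕜] [Fintype m]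
    [DecidableEq m] (W : Matrix m n 𝕜) (v : m → 𝕜) (j : n) :
    (Wᴴ * diagonal v * W) j j = ∑ i, ((‖W i j‖ ^ 2 : ℝ) : 𝕜) * v i := by
  rw [mul_apply]
  simp only [mul_diagonal, conjTranspose_apply, RCLike.star_def]
  refine Finset.sum_congr rfl fun i _ => ?_
  rw [RCLike.ofReal_pow, ← RCLike.conj_mul]
  ring

end Matrix

theorem lie_unitary_conj {A : Type*} [Ring A] [StarRing A] {u : A} (hu : u ∈ unitary A)
    (a b : A) : ⁅u * a * star u, u * b * star u⁆ = u * ⁅a, b⁆ * star u := by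
  have hu' : star u * u = 1 := Unitary.star_mul_self_of_mem hu
  simp only [Ring.lie_def, mul_sub, sub_mul]
  congr 1 <;> simp only [mul_assoc, ← mul_assoc (star u), hu', one_mul]

theorem norm_unitary_conj {A : Type*} [NormedRing A] [StarRing A] [CStarRing A] {u : A}
    (hu : u ∈ unitary A) (a : A) : ‖u * a * star u‖ = ‖a‖ := by
  rw [CStarRing.norm_mul_mem_unitary _ (Unitary.star_mem hu), CStarRing.norm_mem_unitary_mul a hu]

theorem IsSelfAdjoint.exists_lie_eq_norm_le_sqrt_mul {A : Type*} [NormedRing A] [StarRing A]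
    [NormedAlgebra ℂ A] [StarModule ℂ A] {F G : A} (hF : IsSelfAdjoint F)
    (hG : IsSelfAdjoint G) {a b : ℝ} (hFa : ‖F‖ ≤ a) (hGb : ‖G‖ ≤ b) :
    ∃ F' G' : A, IsSelfAdjoint F' ∧ IsSelfAdjoint G' ∧ ⁅F', G'⁆ = ⁅F, G⁆ ∧
      ‖F'‖ ≤ √(a * b) ∧ ‖G'‖ ≤ √(a * b) := by
  have ha : 0 ≤ a := (norm_nonneg F).trans hFa
  have hb : 0 ≤ b := (norm_nonneg G).trans hGb
  rcases ha.eq_or_lt with rfl | ha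
  · obtain rfl : F = 0 := norm_le_zero_iff.mp hFa
    exact ⟨0, 0, .zero A, .zero A, by simp [Ring.lie_def], by simp, by simp⟩
  rcases hb.eq_or_lt with rfl | hb
  · obtain rfl : G = 0 := norm_le_zero_iff.mp hGb
    exact ⟨0, 0, .zero A, .zero A, by simp [Ring.lie_def], by simp, by simp⟩
  set t := √(b / a)
  have ht : 0 < t := Real.sqrt_pos.mpr (div_pos hb ha)
  have hreal : ∀ s : ℝ, IsSelfAdjoint (s : ℂ) := conj_ofReal
  refine ⟨(t : ℂ) • F, ((t⁻¹ : ℝ) : ℂ) • G, (hreal t).smul hF, (hreal t⁻¹).smul hG, ?_, ?_, ?_⟩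
  · have : (t : ℂ) ≠ 0 := by exact_mod_cast ht.ne'
    rw [ofReal_inv, Ring.lie_def, Ring.lie_def, smul_mul_smul_comm, smul_mul_smul_comm,
      mul_inv_cancel₀ this, inv_mul_cancel₀ this, one_smul, one_smul]
  · rw [norm_smul, norm_real, Real.norm_of_nonneg ht.le]
    calc t * ‖F‖ ≤ t * a := by gcongr
      _ = √(a * b) := by
        rw [show a * b = a ^ 2 * (b / a) by field_simp, Real.sqrt_mul (sq_nonneg a),
          Real.sqrt_sq ha.le, mul_comm]
  · rw [norm_smul, norm_real, Real.norm_of_nonneg (inv_nonneg.mpr ht.le)]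
    calc t⁻¹ * ‖G‖ ≤ t⁻¹ * b := by gcongr
      _ = √(a * b) := by
        rw [show a * b = b ^ 2 * (b / a)⁻¹ by field_simp, Real.sqrt_mul (sq_nonneg b),
          Real.sqrt_sq hb.le, Real.sqrt_inv, mul_comm]

theorem sum_fin_pow_of_pow_eq_one {K : Type*} [Field K] [DecidableEq K] {d : ℕ} {z : K}
    (hz : z ^ d = 1) :
    ∑ i : Fin d, z ^ (i : ℕ) = if z = 1 then (d : K) else 0 := by
  rw [Fin.sum_univ_eq_sum_range (z ^ ·)]
  split_ifs with h
  · simp [h]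
  · rw [geom_sum_eq h, hz, sub_self, zero_div]

namespace Matrix

section Fourier

noncomputable def dft (d : ℕ) : Matrix (Fin d) (Fin d) ℂ :=
  of fun j k => ((√d : ℝ) : ℂ)⁻¹ * exp (2 * Real.pi * I / d) ^ ((j : ℕ) * k)

variable {d : ℕ} [NeZero d]

theorem norm_dft_apply_sq (j k : Fin d) : ‖dft d j k‖ ^ 2 = (d : ℝ)⁻¹ := by
  rw [dft, of_apply, norm_mul, norm_pow,
    (isPrimitiveRoot_exp d (NeZero.ne d)).norm'_eq_one (NeZero.ne d), one_pow, mul_one, norm_inv,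
    norm_real, Real.norm_of_nonneg (Real.sqrt_nonneg _), inv_pow,
    Real.sq_sqrt (Nat.cast_nonneg d)]

theorem dft_mem_unitaryGroup : dft d ∈ unitaryGroup (Fin d) ℂ := by
  set ζ := exp (2 * Real.pi * I / d) with hζdef
  have hprim : IsPrimitiveRoot ζ d := isPrimitiveRoot_exp d (NeZero.ne d)
  have hζ : ‖ζ‖ = 1 := hprim.norm'_eq_one (NeZero.ne d)
  rw [mem_unitaryGroup_iff']
  ext j k
  -- the `(j, k)` entry is `d⁻¹ ∑ₘ zᵐ` for the `d`-th root of unity `z = ζ⁻ʲ ζᵏ`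
  set z := (ζ ^ (j : ℕ))⁻¹ * ζ ^ (k : ℕ)
  have hz : z ^ d = 1 := by
    rw [mul_pow, inv_pow, ← pow_mul, ← pow_mul, mul_comm _ d, mul_comm _ d, pow_mul, pow_mul,
      hprim.pow_eq_one, one_pow, one_pow, inv_one, one_mul]
  have hz1 : z = 1 ↔ j = k := by
    rw [inv_mul_eq_one₀ (pow_ne_zero _ (norm_ne_zero_iff.mp (hζ ▸ one_ne_zero))), Fin.ext_iff]
    exact ⟨fun h => hprim.pow_inj j.isLt k.isLt h, fun h => h ▸ rfl⟩
  have hentry : ∀ i : Fin d, star (dft d i j) * dft d i k = (d : ℂ)⁻¹ * z ^ (i : ℕ) := by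
    intro i
    simp only [dft, of_apply, star_mul', star_inv₀, Complex.star_def, conj_ofReal, map_pow,
      ← hζdef, ← inv_eq_conj hζ]
    have hsd : ((√d : ℝ) : ℂ)⁻¹ * ((√d : ℝ) : ℂ)⁻¹ = (d : ℂ)⁻¹ := by
      rw [← mul_inv, ← ofReal_mul, Real.mul_self_sqrt (Nat.cast_nonneg d), ofReal_natCast]
    rw [mul_pow, ← inv_pow, ← pow_mul, ← pow_mul, mul_comm (j : ℕ), mul_comm (k : ℕ)]
    linear_combination (ζ⁻¹ ^ ((i : ℕ) * j) * ζ ^ ((i : ℕ) * k)) * hsd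
  simp only [mul_apply, star_apply, hentry, ← Finset.mul_sum, sum_fin_pow_of_pow_eq_one hz, hz1,
    one_apply]
  split_ifs <;> simp [NeZero.ne d]

theorem IsHermitian.exists_unitary_conj_diag_eq_zero {H : Matrix (Fin d) (Fin d) ℂ}
    (hH : H.IsHermitian) (htr : H.trace = 0) :
    ∃ Q ∈ unitaryGroup (Fin d) ℂ, ∃ M : Matrix (Fin d) (Fin d) ℂ,
      M.IsHermitian ∧ (∀ j, M j j = 0) ∧ H = Q * M * star Q := by
  set U : Matrix (Fin d) (Fin d) ℂ := (hH.eigenvectorUnitary : Matrix (Fin d) (Fin d) ℂ)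
  set D : Matrix (Fin d) (Fin d) ℂ := diagonal (RCLike.ofReal ∘ hH.eigenvalues)
  set W := dft d
  have hU : U ∈ unitaryGroup (Fin d) ℂ := hH.eigenvectorUnitary.2
  have hW : W ∈ unitaryGroup (Fin d) ℂ := dft_mem_unitaryGroup
  have hHD : H = U * D * star U := hH.spectral_theorem
  have hD : D.IsHermitian := isHermitian_diagonal_of_self_adjoint _ <|
    funext fun i => RCLike.conj_ofReal (hH.eigenvalues i)
  refine ⟨U * W, Submonoid.mul_mem _ hU hW, star W * D * W,
    (isHermitian_iff_isSelfAdjoint.mp hD).conjugate' W, fun j => ?_, ?_⟩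
  · rw [star_eq_conjTranspose, conjTranspose_mul_diagonal_mul_apply_self]
    simp only [W, norm_dft_apply_sq, ← Finset.mul_sum]
    rw [show ∑ i, (RCLike.ofReal ∘ hH.eigenvalues) i = H.trace by
      simp [hH.trace_eq_sum_eigenvalues], htr, mul_zero]
  · rw [star_mul, hHD]
    simp only [mul_assoc, ← mul_assoc W, Unitary.mul_star_self_of_mem hW, one_mul]

end Fourier

variable {n : Type*}

/-- Entrywise inverse of `X ↦ ⁅diagonal a, X⁆`, which multiplies the `(j, k)` entry by
`a j - a k`; the diagonal entries are `0` because `x / 0 = 0`. -/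
def invAdDiagonal {K : Type*} [DivisionRing K] (a : n → K) (M : Matrix n n K) : Matrix n n K :=
  of fun j k => M j k / (a j - a k)

theorem lie_diagonal_invAdDiagonal {K : Type*} [Field K] [Fintype n] [DecidableEq n]
    {a : n → K} {M : Matrix n n K} (ha : Function.Injective a) (hM : ∀ j, M j j = 0) :
    ⁅diagonal a, invAdDiagonal a M⁆ = M := by
  ext j k
  rw [Ring.lie_def, sub_apply, diagonal_mul, mul_diagonal, invAdDiagonal, of_apply]
  rcases eq_or_ne j k with rfl | hjk
  · simp [hM]
  · have : a j - a k ≠ 0 := sub_ne_zero.mpr (ha.ne hjk)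
    field_simp

theorem lie_diagonal_I_smul_invAdDiagonal [Fintype n] [DecidableEq n] {a : n → ℂ}
    {M : Matrix n n ℂ} (ha : Function.Injective a) (hM : ∀ j, M j j = 0) :
    ⁅diagonal a, I • invAdDiagonal a M⁆ = I • M := by
  rw [Ring.lie_def, Matrix.mul_smul, Matrix.smul_mul, ← smul_sub, ← Ring.lie_def,
    lie_diagonal_invAdDiagonal ha hM]

theorem isHermitian_I_smul_invAdDiagonal {a : n → ℂ} {M : Matrix n n ℂ} (ha : IsSelfAdjoint a)
    (hM : M.IsHermitian) : (I • invAdDiagonal a M).IsHermitian := by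
  ext j k
  rw [conjTranspose_apply, smul_apply, smul_apply, invAdDiagonal, of_apply, of_apply,
    ← hM.apply j k]
  simp only [smul_eq_mul, star_mul', star_div₀, Complex.star_def, conj_I, map_sub]
  have ha' : ∀ i, (starRingEnd ℂ) (a i) = a i := congrFun ha
  rw [ha', ha', ← neg_sub (a j), div_neg, neg_mul_neg]

section RCLike

variable {𝕜 : Type*} [RCLike 𝕜] {a : n → 𝕜} {M : Matrix n n 𝕜}

theorem norm_invAdDiagonal_apply_le (ha : ∀ j k, j ≠ k → 1 ≤ ‖a j - a k‖) (j k : n) :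
    ‖invAdDiagonal a M j k‖ ≤ ‖M j k‖ := by
  rw [invAdDiagonal, of_apply, norm_div]
  rcases eq_or_ne j k with rfl | hjk
  · simp
  · exact div_le_self (norm_nonneg _) (ha j k hjk)

theorem l2_opNorm_invAdDiagonal_le [Fintype n] [DecidableEq n]
    (ha : ∀ j k, j ≠ k → 1 ≤ ‖a j - a k‖) :
    ‖invAdDiagonal a M‖ ≤ √(Fintype.card n) * ‖M‖ := by
  calc ‖invAdDiagonal a M‖ ≤ √(∑ j, ∑ k, ‖invAdDiagonal a M j k‖ ^ 2) :=
        l2_opNorm_le_sqrt_sum_norm_sq _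
    _ ≤ √(∑ j, ∑ k, ‖M j k‖ ^ 2) := by
        gcongr with j _ k _
        exact norm_invAdDiagonal_apply_le ha j k
    _ ≤ √(Fintype.card n * ‖M‖ ^ 2) := by
        gcongr
        exact sum_norm_sq_le_card_mul_l2_opNorm_sq M
    _ = √(Fintype.card n) * ‖M‖ := by
        rw [Real.sqrt_mul (Nat.cast_nonneg _), Real.sqrt_sq (norm_nonneg M)]

end RCLike

noncomputable def centeredIndex (d : ℕ) (j : Fin d) : ℂ := ((j : ℕ) - ((d : ℝ) - 1) / 2 : ℝ)

theorem centeredIndex_sub {d : ℕ} (j k : Fin d) :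
    centeredIndex d j - centeredIndex d k = ((j : ℕ) - (k : ℕ) : ℝ) := by
  rw [centeredIndex, centeredIndex, ← ofReal_sub, sub_sub_sub_cancel_right]

theorem centeredIndex_injective {d : ℕ} : Function.Injective (centeredIndex d) := fun j k h => by
  have hjk := centeredIndex_sub j k
  rw [h, sub_self, eq_comm, ofReal_eq_zero, sub_eq_zero] at hjk
  exact Fin.ext (by exact_mod_cast hjk)

theorem one_le_norm_centeredIndex_sub {d : ℕ} {j k : Fin d} (hjk : j ≠ k) :
    1 ≤ ‖centeredIndex d j - centeredIndex d k‖ := by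
  rw [centeredIndex_sub, norm_real, Real.norm_eq_abs]
  rcases Fin.lt_or_lt_of_ne hjk with h | h
  · have : (j : ℝ) + 1 ≤ k := by exact_mod_cast h
    exact le_abs.mpr (Or.inr (by linarith))
  · have : (k : ℝ) + 1 ≤ j := by exact_mod_cast h
    exact le_abs.mpr (Or.inl (by linarith))

theorem isSelfAdjoint_centeredIndex (d : ℕ) : IsSelfAdjoint (centeredIndex d) :=
  funext fun _ => conj_ofReal _

theorem l2_opNorm_diagonal_centeredIndex_le (d : ℕ) [NeZero d] :
    ‖diagonal (centeredIndex d)‖ ≤ ((d : ℝ) - 1) / 2 := by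
  have hd : (1 : ℝ) ≤ d := by exact_mod_cast Nat.one_le_iff_ne_zero.mpr (NeZero.ne d)
  rw [l2_opNorm_diagonal, pi_norm_le_iff_of_nonneg (by linarith)]
  intro j
  have hj : (j : ℝ) + 1 ≤ d := by exact_mod_cast j.isLt
  rw [centeredIndex, norm_real, Real.norm_eq_abs, abs_le]
  constructor <;> linarith [(j : ℕ).cast_nonneg (α := ℝ)]

theorem IsHermitian.exists_lie_eq_I_smul_of_diag_eq_zero {d : ℕ} [NeZero d]
    {M : Matrix (Fin d) (Fin d) ℂ} (hM : M.IsHermitian) (hdiag : ∀ j, M j j = 0) :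
    ∃ F G : Matrix (Fin d) (Fin d) ℂ, F.IsHermitian ∧ G.IsHermitian ∧ ⁅F, G⁆ = I • M ∧
      ‖F‖ ≤ (d : ℝ) ^ ((1 : ℝ) / 4) * (((d : ℝ) - 1) / 2) ^ ((1 : ℝ) / 2) * √‖M‖ ∧
      ‖G‖ ≤ (d : ℝ) ^ ((1 : ℝ) / 4) * (((d : ℝ) - 1) / 2) ^ ((1 : ℝ) / 2) * √‖M‖ := by
  set a := centeredIndex d
  have hG₀ : ‖I • invAdDiagonal a M‖ ≤ √d * ‖M‖ := by
    simpa [norm_smul] using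
      l2_opNorm_invAdDiagonal_le (M := M) fun _ _ => one_le_norm_centeredIndex_sub
  obtain ⟨F, G, hF, hG, hFG, hFn, hGn⟩ :=
    (isHermitian_diagonal_of_self_adjoint a (isSelfAdjoint_centeredIndex d)).isSelfAdjoint
      |>.exists_lie_eq_norm_le_sqrt_mul
        (isHermitian_I_smul_invAdDiagonal (isSelfAdjoint_centeredIndex d) hM).isSelfAdjoint
        (l2_opNorm_diagonal_centeredIndex_le d) hG₀
  rw [lie_diagonal_I_smul_invAdDiagonal centeredIndex_injective hdiag] at hFG
  have hbound : √(((d : ℝ) - 1) / 2 * (√d * ‖M‖)) =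
      (d : ℝ) ^ ((1 : ℝ) / 4) * (((d : ℝ) - 1) / 2) ^ ((1 : ℝ) / 2) * √‖M‖ := by
    have hd : (1 : ℝ) ≤ d := by exact_mod_cast Nat.one_le_iff_ne_zero.mpr (NeZero.ne d)
    have h4 : (d : ℝ) ^ ((1 : ℝ) / 4) = √(√d) := by
      rw [Real.sqrt_eq_rpow, Real.sqrt_eq_rpow, ← Real.rpow_mul (Nat.cast_nonneg d)]
      norm_num
    rw [h4, ← Real.sqrt_eq_rpow, Real.sqrt_mul (by linarith), Real.sqrt_mul (by positivity)]
    ring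
  exact ⟨F, G, hF, hG, hFG, hbound ▸ hFn, hbound ▸ hGn⟩

end Matrix

theorem exists_balanced_commutator_decomposition {d : ℕ} (hd : 2 ≤ d)
    (H : Matrix (Fin d) (Fin d) ℂ) (hH : H.IsHermitian)
    (htr : Matrix.trace H = 0) :
    ∃ F G : Matrix (Fin d) (Fin d) ℂ, F.IsHermitian ∧ G.IsHermitian ∧
      ⁅F, G⁆ = Complex.I • H ∧
      ‖F‖ ≤ (d : ℝ) ^ ((1 : ℝ) / 4) * (((d : ℝ) - 1) / 2) ^ ((1 : ℝ) / 2) * Real.sqrt ‖H‖ ∧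
      ‖G‖ ≤ (d : ℝ) ^ ((1 : ℝ) / 4) * (((d : ℝ) - 1) / 2) ^ ((1 : ℝ) / 2) * Real.sqrt ‖H‖ := by
  have : NeZero d := ⟨by omega⟩
  obtain ⟨Q, hQ, M, hM, hdiag, rfl⟩ := hH.exists_unitary_conj_diag_eq_zero htr
  obtain ⟨F, G, hF, hG, hFG, hFn, hGn⟩ := hM.exists_lie_eq_I_smul_of_diag_eq_zero hdiag
  rw [norm_unitary_conj hQ]
  refine ⟨Q * F * star Q, Q * G * star Q, isHermitian_mul_mul_conjTranspose Q hF,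
    isHermitian_mul_mul_conjTranspose Q hG, ?_, by rwa [norm_unitary_conj hQ],
    by rwa [norm_unitary_conj hQ]⟩
  rw [lie_unitary_conj hQ, hFG, mul_smul_comm, smul_mul_assoc]
end

section
/- Suppose F and G are Hermitian matrices with ‖F‖ < δ and ‖G‖ < δ. Then ‖exp(iF)exp(iG)exp(−iF)exp(−iG) − exp(−[F,G])‖ ≤ c₁ δ³ for some universal constant c₁ (one may take c₁ = 10). -/
/-!
With `a = I • F` and `b = I • G` skew-adjoint, every exponential involved is unitary and
`-⁅F, G⁆ = ⁅a, b⁆`. Right multiplication by the unitary `exp b * exp a` turns the error into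
`‖exp a * exp b - exp ⁅a, b⁆ * (exp b * exp a)‖`. For skew-adjoint `x`, unitarity of
`exp (t • x)` gives the Taylor bounds `‖exp x - 1‖ ≤ ‖x‖` and `‖exp x - 1 - x‖ ≤ ‖x‖ ^ 2 / 2`
without any `exp ‖x‖` factor. Writing `exp x = 1 + x + p x`, the first-order terms cancel
exactly in the commutator, and what remains is at most `6 * δ ^ 3 + 5 / 2 * δ ^ 4 ≤ 10 * δ ^ 3`
when `δ ≤ 1`; for `δ > 1` the trivial bound `2` on a difference of unitaries suffices.
-/

open scoped Matrix.Norms.L2Operator Nat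
open Matrix NormedSpace Finset

lemma norm_lie_le {R : Type*} [NormedRing R] (x y : R) : ‖⁅x, y⁆‖ ≤ 2 * ‖x‖ * ‖y‖ := by
  rw [Ring.lie_def]
  calc ‖x * y - y * x‖ ≤ ‖x‖ * ‖y‖ + ‖y‖ * ‖x‖ :=
      (norm_sub_le _ _).trans (add_le_add (norm_mul_le _ _) (norm_mul_le _ _))
    _ = 2 * ‖x‖ * ‖y‖ := by ring

theorem hasDerivAt_sum_smul_pow {𝔸 : Type*} [NormedRing 𝔸] [NormedAlgebra ℝ 𝔸]
    (x : 𝔸) (n : ℕ) (t : ℝ) :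
    HasDerivAt (fun s : ℝ => ∑ k ∈ range (n + 1), (k !⁻¹ : ℝ) • (s • x) ^ k)
      ((∑ k ∈ range n, (k !⁻¹ : ℝ) • (t • x) ^ k) * x) t := by
  have hterm (k : ℕ) : HasDerivAt (fun s : ℝ => (k !⁻¹ : ℝ) • (s • x) ^ k)
      (((k !⁻¹ : ℝ) * (k * t ^ (k - 1))) • x ^ k) t := by
    simpa only [smul_pow, smul_smul] using
      ((hasDerivAt_pow k t).const_mul (k !⁻¹ : ℝ)).smul_const (x ^ k)
  refine (HasDerivAt.fun_sum (u := range (n + 1)) fun k _ => hterm k).congr_deriv ?_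
  rw [sum_range_succ', sum_mul]
  simp only [CharP.cast_eq_zero, zero_mul, mul_zero, zero_smul, add_zero]
  refine sum_congr rfl fun k _ => ?_
  rw [smul_pow, smul_mul_assoc, smul_mul_assoc, ← pow_succ, smul_smul, Nat.add_sub_cancel,
    Nat.factorial_succ]
  congr 1
  push_cast
  field_simp

section CStarAlgebra

variable {A : Type*} [CStarAlgebra A]

lemma norm_le_one_of_mem_unitary {u : A} (hu : u ∈ unitary A) : ‖u‖ ≤ 1 := by
  rcases subsingleton_or_nontrivial A with _ | _
  · simp [Subsingleton.elim u 0]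
  · exact (CStarRing.norm_of_mem_unitary hu).le

lemma lie_mem_skewAdjoint {a b : A} (ha : a ∈ skewAdjoint A) (hb : b ∈ skewAdjoint A) :
    ⁅a, b⁆ ∈ skewAdjoint A := by
  rw [skewAdjoint.mem_iff] at *
  rw [Ring.lie_def, star_sub, star_mul, star_mul, ha, hb]
  noncomm_ring

/-- The derivative of the remainder `exp (t • x) - ∑ k ∈ range (n + 1), …` in `t` is the previous
remainder times `x`; since `exp (t • x)` is unitary, induction on `n` bounds the remainder by the
first omitted term of the series. -/
theorem norm_exp_sub_sum_le_of_mem_skewAdjoint (n : ℕ) {x : A} (hx : x ∈ skewAdjoint A) :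
    ‖exp x - ∑ k ∈ range n, (k !⁻¹ : ℝ) • x ^ k‖ ≤ ‖x‖ ^ n / n ! := by
  let +nondep : NormedAlgebra ℚ A := .restrictScalars ℚ ℂ A
  induction n generalizing x with
  | zero => simpa using norm_le_one_of_mem_unitary (exp_mem_unitary_of_mem_skewAdjoint hx)
  | succ n ih =>
    let g : ℝ → A := fun t => exp (t • x) - ∑ k ∈ range (n + 1), (k !⁻¹ : ℝ) • (t • x) ^ k
    have hg (t : ℝ) : HasDerivAt g
        ((exp (t • x) - ∑ k ∈ range n, (k !⁻¹ : ℝ) • (t • x) ^ k) * x) t :=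
      ((hasDerivAt_exp_smul_const x t).sub (hasDerivAt_sum_smul_pow x n t)).congr_deriv
        (sub_mul _ _ _).symm
    have hB (t : ℝ) : HasDerivAt (fun s => ‖x‖ ^ (n + 1) * s ^ (n + 1) / (n + 1)!)
        (‖x‖ ^ (n + 1) * t ^ n / n !) t := by
      refine (((hasDerivAt_pow (n + 1) t).const_mul (‖x‖ ^ (n + 1))).div_const
        ((n + 1)! : ℝ)).congr_deriv ?_
      rw [Nat.factorial_succ]
      push_cast
      field_simp
    have hg_bound : ∀ t ∈ Set.Ico (0 : ℝ) 1,
        ‖(exp (t • x) - ∑ k ∈ range n, (k !⁻¹ : ℝ) • (t • x) ^ k) * x‖ ≤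
          ‖x‖ ^ (n + 1) * t ^ n / n ! := by
      intro t ht
      calc _ ≤ ‖exp (t • x) - ∑ k ∈ range n, (k !⁻¹ : ℝ) • (t • x) ^ k‖ * ‖x‖ := norm_mul_le _ _
        _ ≤ ‖t • x‖ ^ n / n ! * ‖x‖ := by gcongr; exact ih (skewAdjoint.smul_mem t hx)
        _ = _ := by rw [norm_smul, Real.norm_of_nonneg ht.1]; ring
    simpa [g] using image_norm_le_of_norm_deriv_right_le_deriv_boundary
      (fun t _ => (hg t).continuousAt.continuousWithinAt) (fun t _ => (hg t).hasDerivWithinAt)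
      (by simp [g, sum_range_succ']) hB hg_bound (Set.right_mem_Icc.2 zero_le_one)

lemma norm_exp_sub_one_le_of_mem_skewAdjoint {x : A} (hx : x ∈ skewAdjoint A) :
    ‖exp x - 1‖ ≤ ‖x‖ := by
  simpa using norm_exp_sub_sum_le_of_mem_skewAdjoint 1 hx

lemma norm_exp_sub_one_sub_le_of_mem_skewAdjoint {x : A} (hx : x ∈ skewAdjoint A) :
    ‖exp x - 1 - x‖ ≤ ‖x‖ ^ 2 / 2 := by
  simpa [sum_range_succ, sub_sub] using norm_exp_sub_sum_le_of_mem_skewAdjoint 2 hx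

lemma norm_exp_mul_exp_sub_one_le {a b : A} (ha : a ∈ skewAdjoint A) (hb : b ∈ skewAdjoint A) :
    ‖exp b * exp a - 1‖ ≤ ‖a‖ + ‖b‖ := by
  let +nondep : NormedAlgebra ℚ A := .restrictScalars ℚ ℂ A
  calc ‖exp b * exp a - 1‖ = ‖(exp b - 1) * exp a + (exp a - 1)‖ := by noncomm_ring
    _ ≤ ‖exp b - 1‖ + ‖exp a - 1‖ := by
        rw [← CStarRing.norm_mul_mem_unitary (exp b - 1) (exp_mem_unitary_of_mem_skewAdjoint ha)]
        exact norm_add_le _ _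
    _ ≤ ‖a‖ + ‖b‖ := by
        linarith [norm_exp_sub_one_le_of_mem_skewAdjoint ha,
          norm_exp_sub_one_le_of_mem_skewAdjoint hb]

theorem norm_exp_mul_exp_sub_exp_lie_mul_le {a b : A} (ha : a ∈ skewAdjoint A)
    (hb : b ∈ skewAdjoint A) {δ : ℝ} (haδ : ‖a‖ ≤ δ) (hbδ : ‖b‖ ≤ δ) :
    ‖exp a * exp b - exp ⁅a, b⁆ * (exp b * exp a)‖ ≤ 6 * δ ^ 3 + 5 / 2 * δ ^ 4 := by
  let +nondep : NormedAlgebra ℚ A := .restrictScalars ℚ ℂ A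
  set p := exp a - 1 - a
  set q := exp b - 1 - b
  set k := ⁅a, b⁆
  set u := exp b * exp a
  have hδ : 0 ≤ δ := (norm_nonneg a).trans haδ
  have hp : ‖p‖ ≤ δ ^ 2 / 2 := (norm_exp_sub_one_sub_le_of_mem_skewAdjoint ha).trans (by gcongr)
  have hq : ‖q‖ ≤ δ ^ 2 / 2 := (norm_exp_sub_one_sub_le_of_mem_skewAdjoint hb).trans (by gcongr)
  have hk : ‖k‖ ≤ 2 * δ ^ 2 := by
    calc ‖k‖ ≤ 2 * ‖a‖ * ‖b‖ := norm_lie_le a b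
      _ ≤ 2 * δ * δ := by gcongr
      _ = 2 * δ ^ 2 := by ring
  have hexp_k : ‖exp k - 1 - k‖ ≤ 2 * δ ^ 4 := by
    calc ‖exp k - 1 - k‖ ≤ ‖k‖ ^ 2 / 2 :=
          norm_exp_sub_one_sub_le_of_mem_skewAdjoint (lie_mem_skewAdjoint ha hb)
      _ ≤ (2 * δ ^ 2) ^ 2 / 2 := by gcongr
      _ = 2 * δ ^ 4 := by ring
  have hu_sub : ‖u - 1‖ ≤ 2 * δ := by linarith [norm_exp_mul_exp_sub_one_le ha hb]
  have hu : ‖u‖ ≤ 1 := norm_le_one_of_mem_unitary <|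
    mul_mem (exp_mem_unitary_of_mem_skewAdjoint hb) (exp_mem_unitary_of_mem_skewAdjoint ha)
  have expand : exp a * exp b - exp k * u =
      ⁅a, q⁆ + ⁅p, b⁆ + ⁅p, q⁆ - k * (u - 1) - (exp k - 1 - k) * u := by
    simp only [p, q, k, u, Ring.lie_def]
    noncomm_ring
  rw [expand]
  calc _ ≤ ‖⁅a, q⁆‖ + ‖⁅p, b⁆‖ + ‖⁅p, q⁆‖ + ‖k * (u - 1)‖ + ‖(exp k - 1 - k) * u‖ :=
        norm_sub_le_of_le (norm_sub_le_of_le norm_add₃_le le_rfl) le_rfl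
    _ ≤ 2 * ‖a‖ * ‖q‖ + 2 * ‖p‖ * ‖b‖ + 2 * ‖p‖ * ‖q‖ + ‖k‖ * ‖u - 1‖
        + ‖exp k - 1 - k‖ * ‖u‖ := by
        gcongr <;> first | exact norm_lie_le _ _ | exact norm_mul_le _ _
    _ ≤ 2 * δ * (δ ^ 2 / 2) + 2 * (δ ^ 2 / 2) * δ + 2 * (δ ^ 2 / 2) * (δ ^ 2 / 2)
        + 2 * δ ^ 2 * (2 * δ) + 2 * δ ^ 4 * 1 := by gcongr
    _ = 6 * δ ^ 3 + 5 / 2 * δ ^ 4 := by ring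

lemma norm_exp_commutator_sub_eq {a b : A} (ha : a ∈ skewAdjoint A) (hb : b ∈ skewAdjoint A)
    (w : A) :
    ‖exp a * exp b * exp (-a) * exp (-b) - w‖ = ‖exp a * exp b - w * (exp b * exp a)‖ := by
  let +nondep : NormedAlgebra ℚ A := .restrictScalars ℚ ℂ A
  have hinv (x : A) : exp (-x) * exp x = 1 := by
    rw [← exp_add_of_commute (Commute.refl x).neg_left, neg_add_cancel, exp_zero]
  rw [← CStarRing.norm_mul_mem_unitary _ (mul_mem (exp_mem_unitary_of_mem_skewAdjoint hb)
    (exp_mem_unitary_of_mem_skewAdjoint ha)), sub_mul]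
  congr 2
  rw [mul_assoc _ (exp (-b)), ← mul_assoc (exp (-b)), hinv, one_mul, mul_assoc _ (exp (-a)),
    hinv, mul_one]

theorem norm_exp_commutator_sub_exp_lie_le {a b : A} (ha : a ∈ skewAdjoint A)
    (hb : b ∈ skewAdjoint A) {δ : ℝ} (haδ : ‖a‖ ≤ δ) (hbδ : ‖b‖ ≤ δ) :
    ‖exp a * exp b * exp (-a) * exp (-b) - exp ⁅a, b⁆‖ ≤ 6 * δ ^ 3 + 5 / 2 * δ ^ 4 := by
  rw [norm_exp_commutator_sub_eq ha hb]
  exact norm_exp_mul_exp_sub_exp_lie_mul_le ha hb haδ hbδ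

lemma norm_exp_commutator_sub_exp_lie_le_two {a b : A} (ha : a ∈ skewAdjoint A)
    (hb : b ∈ skewAdjoint A) :
    ‖exp a * exp b * exp (-a) * exp (-b) - exp ⁅a, b⁆‖ ≤ 2 := by
  let +nondep : NormedAlgebra ℚ A := .restrictScalars ℚ ℂ A
  have hU {x : A} (hx : x ∈ skewAdjoint A) := exp_mem_unitary_of_mem_skewAdjoint hx
  refine (norm_sub_le _ _).trans ?_
  linarith [norm_le_one_of_mem_unitary
      (mul_mem (mul_mem (mul_mem (hU ha) (hU hb)) (hU (neg_mem ha))) (hU (neg_mem hb))),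
    norm_le_one_of_mem_unitary (hU (lie_mem_skewAdjoint ha hb))]

end CStarAlgebra

theorem exp_group_commutator_approx {d : ℕ}
    (F G : Matrix (Fin d) (Fin d) ℂ)
    (hF : F.IsHermitian) (hG : G.IsHermitian)
    (δ : ℝ) (hFδ : ‖F‖ < δ) (hGδ : ‖G‖ < δ) :
    ‖exp (Complex.I • F) * exp (Complex.I • G) *
        exp (-(Complex.I • F)) * exp (-(Complex.I • G)) -
        exp (-⁅F, G⁆)‖ ≤ 10 * δ ^ 3 := by
  have hA := hF.isSelfAdjoint.smul_mem_skewAdjoint Complex.conj_I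
  have hB := hG.isSelfAdjoint.smul_mem_skewAdjoint Complex.conj_I
  have hAδ : ‖Complex.I • F‖ ≤ δ := by rw [norm_smul, Complex.norm_I, one_mul]; exact hFδ.le
  have hBδ : ‖Complex.I • G‖ ≤ δ := by rw [norm_smul, Complex.norm_I, one_mul]; exact hGδ.le
  have hlie : -⁅F, G⁆ = ⁅Complex.I • F, Complex.I • G⁆ := by
    rw [Ring.lie_def, Ring.lie_def, smul_mul_smul_comm, smul_mul_smul_comm, Complex.I_mul_I,
      ← smul_sub, neg_one_smul]
  have hδ : 0 ≤ δ := (norm_nonneg F).trans hFδ.le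
  rw [hlie]
  rcases le_or_gt δ 1 with hδ1 | hδ1
  · calc _ ≤ 6 * δ ^ 3 + 5 / 2 * δ ^ 4 := norm_exp_commutator_sub_exp_lie_le hA hB hAδ hBδ
      _ ≤ 10 * δ ^ 3 := by
          nlinarith [pow_nonneg hδ 3, mul_nonneg (pow_nonneg hδ 3) (sub_nonneg.2 hδ1)]
  · calc _ ≤ 2 := norm_exp_commutator_sub_exp_lie_le_two hA hB
      _ ≤ 10 * δ ^ 3 := by nlinarith [one_le_pow₀ (n := 3) hδ1.le]
end

section
/- Every U ∈ SU(2) can be written as a group commutator U = VWV†W† with V, W ∈ SU(2), and moreover if d(I,U) < ε then V and W can be chosen with d(I,V) = d(I,W) ≤ √(d(I,U)) < √ε (for ε sufficiently small, with constant approximately 1/√2 in place of 1). -/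
open scoped Matrix.Norms.L2Operator
open Matrix

/-!
Under the identification of SU(2) with the unit quaternions, which is an isometry for the
operator norm, `‖1 - x‖² = 2 - 2 re x` for a unit quaternion `x`. Two unit quaternions with the
same real part have imaginary parts `u`, `w` of the same length, so `u² = w²`, and then
`r = u (u + w)` satisfies `u r = r w`: they are conjugate by a unit quaternion unless `u = -w`.
The commutator of `v = p + q i` and `w = p + q j` (`p² + q² = 1`) has real part `1 - 2 q⁴`;
taking `q² = ‖1 - x‖ / 2` makes it conjugate to `x` or to `x⋆` (then swap `v` and `w`), and
conjugation keeps `‖1 - v‖ = ‖1 - w‖ = √(2 - 2p) ≤ √(2 q²) = √‖1 - x‖`.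
-/

theorem mul_mul_add_eq_mul_add_mul {R : Type*} [NonUnitalSemiring R] {u w : R}
    (h : u * u = w * w) : u * (u * (u + w)) = u * (u + w) * w := by
  simp only [mul_add, add_mul, mul_assoc, ← h]
  abel

theorem conj_mul_mul_star_mul_star {R : Type*} [Monoid R] [StarMul R] {s : R}
    (hs : star s * s = 1) (v w : R) :
    s * (v * w * star v * star w) * star s =
      s * v * star s * (s * w * star s) * star (s * v * star s) * star (s * w * star s) := by
  have cancel (a : R) : star s * (s * a) = a := by rw [← mul_assoc, hs, one_mul]
  simp only [star_mul, star_star, mul_assoc, cancel]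

namespace Quaternion

theorem norm_eq_one_iff {x : ℍ[ℝ]} : ‖x‖ = 1 ↔ normSq x = 1 := by
  rw [norm_eq_sqrt_real_inner, inner_self, Real.sqrt_eq_one]

theorem mem_unitary_iff_norm_eq_one {s : ℍ[ℝ]} : s ∈ unitary ℍ[ℝ] ↔ ‖s‖ = 1 := by
  rw [Unitary.mem_iff, star_mul_self, self_mul_star, and_self, ← coe_one, coe_inj,
    norm_eq_one_iff]

theorem norm_one_sub_sq_of_norm_eq_one {x : ℍ[ℝ]} (hx : ‖x‖ = 1) :
    ‖1 - x‖ ^ 2 = 2 - 2 * x.re := by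
  rw [norm_sub_sq_real, inner_def, norm_one, hx, one_mul, re_star]
  ring

theorem norm_mul_mul_star {s : ℍ[ℝ]} (hs : ‖s‖ = 1) (a : ℍ[ℝ]) :
    ‖s * a * star s‖ = ‖a‖ := by
  rw [norm_mul, norm_mul, norm_star, hs, one_mul, mul_one]

theorem norm_one_sub_mul_mul_star {s : ℍ[ℝ]} (hs : ‖s‖ = 1) (a : ℍ[ℝ]) :
    ‖1 - s * a * star s‖ = ‖1 - a‖ := by
  rw [← norm_mul_mul_star hs (1 - a), mul_sub, sub_mul, mul_one,
    Unitary.mul_star_self_of_mem (mem_unitary_iff_norm_eq_one.2 hs)]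

theorem exists_conj_eq_of_re_eq {x y : ℍ[ℝ]} (hre : x.re = y.re) (hnorm : ‖x‖ = ‖y‖)
    (hne : x ≠ star y) : ∃ s : ℍ[ℝ], ‖s‖ = 1 ∧ x = s * y * star s := by
  have him : normSq x.im = normSq y.im := by
    have := congrArg (fun t => t * t) hnorm
    simp only [← normSq_eq_norm_mul_self, normSq_def'] at this
    simp only [normSq_def', re_im, imI_im, imJ_im, imK_im, hre] at this ⊢
    linarith
  have hsq : x.im * x.im = y.im * y.im := by
    rw [← sq, ← sq, im_sq, im_sq, him]
  have hx0 : x.im ≠ 0 := by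
    intro h0
    have : y.im = 0 := by rwa [← normSq_eq_zero, ← him, normSq_eq_zero]
    exact hne (by rw [← re_add_im x, ← re_add_im y, h0, this, hre]; simp)
  have hxy : x.im + y.im ≠ 0 := by
    intro h0
    exact hne (by rw [← re_add_im x, eq_neg_of_add_eq_zero_left h0, hre]; ext <;> simp)
  set r := x.im * (x.im + y.im)
  have hr : x * r = r * y := by
    rw [← re_add_im x, ← re_add_im y, add_mul, mul_add, coe_commutes, hre,
      mul_mul_add_eq_mul_add_mul hsq]
  set s := ‖r‖⁻¹ • r
  have hs : ‖s‖ = 1 := norm_smul_inv_norm (mul_ne_zero hx0 hxy)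
  have hs' : x * s = s * y := by rw [mul_smul_comm, hr, smul_mul_assoc]
  refine ⟨s, hs, ?_⟩
  calc x = x * (s * star s) := by rw [self_mul_star, norm_eq_one_iff.1 hs, coe_one, mul_one]
    _ = s * y * star s := by rw [← mul_assoc, hs']

/-- With `p = cos (φ / 2)` and `q = sin (φ / 2)`, `rotI p q` and `rotJ p q` are the rotations by
`φ` about two orthogonal axes. -/
@[simps]
def rotI (p q : ℝ) : ℍ[ℝ] := ⟨p, q, 0, 0⟩

@[simps]
def rotJ (p q : ℝ) : ℍ[ℝ] := ⟨p, 0, q, 0⟩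

theorem norm_rotI {p q : ℝ} (h : p ^ 2 + q ^ 2 = 1) : ‖rotI p q‖ = 1 := by
  rw [norm_eq_one_iff, normSq_def']
  simp [h]

theorem norm_rotJ {p q : ℝ} (h : p ^ 2 + q ^ 2 = 1) : ‖rotJ p q‖ = 1 := by
  rw [norm_eq_one_iff, normSq_def']
  simp [h]

theorem re_commutator_rotI_rotJ {p q : ℝ} (h : p ^ 2 + q ^ 2 = 1) :
    (rotI p q * rotJ p q * star (rotI p q) * star (rotJ p q)).re = 1 - 2 * q ^ 4 := by
  simp only [re_mul, imI_mul, imJ_mul, imK_mul, re_star, imI_star, imJ_star, imK_star, re_rotI,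
    imI_rotI, imJ_rotI, imK_rotI, re_rotJ, imI_rotJ, imJ_rotJ, imK_rotJ]
  linear_combination (p ^ 2 + q ^ 2 + 1) * h

theorem exists_balanced_commutator {x : ℍ[ℝ]} (hx : ‖x‖ = 1) :
    ∃ v w : ℍ[ℝ], ‖v‖ = 1 ∧ ‖w‖ = 1 ∧ x = v * w * star v * star w ∧
      ‖1 - v‖ = ‖1 - w‖ ∧ ‖1 - v‖ ≤ √‖1 - x‖ := by
  set t := ‖1 - x‖ / 2
  have h2t : ‖1 - x‖ = 2 * t := by ring
  have ht0 : 0 ≤ t := by positivity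
  have ht1 : t ≤ 1 := by
    have := norm_sub_le (1 : ℍ[ℝ]) x
    rw [norm_one, hx] at this
    linarith
  set p := √(1 - t)
  set q := √t
  have hp : p ^ 2 = 1 - t := Real.sq_sqrt (by linarith)
  have hq : q ^ 2 = t := Real.sq_sqrt ht0
  have hpq : p ^ 2 + q ^ 2 = 1 := by rw [hp, hq]; ring
  set v := rotI p q
  set w := rotJ p q
  have hv : ‖v‖ = 1 := norm_rotI hpq
  have hw : ‖w‖ = 1 := norm_rotJ hpq
  have hvw : ‖1 - v‖ = ‖1 - w‖ := by
    rw [← sq_eq_sq₀ (norm_nonneg _) (norm_nonneg _), norm_one_sub_sq_of_norm_eq_one hv,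
      norm_one_sub_sq_of_norm_eq_one hw, re_rotI, re_rotJ]
  have hle : ‖1 - v‖ ≤ √‖1 - x‖ := by
    rw [Real.le_sqrt (norm_nonneg _) (norm_nonneg _), norm_one_sub_sq_of_norm_eq_one hv, re_rotI]
    have : p ≤ 1 := Real.sqrt_le_one.2 (by linarith)
    nlinarith [Real.sqrt_nonneg (1 - t)]
  set C := v * w * star v * star w
  have hC : ‖C‖ = 1 := by simp only [C, norm_mul, norm_star, hv, hw, mul_one]
  have hCre : x.re = C.re := by
    have := norm_one_sub_sq_of_norm_eq_one hx
    rw [re_commutator_rotI_rotJ hpq, show q ^ 4 = t ^ 2 by rw [← hq]; ring]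
    rw [h2t] at this
    linarith
  by_cases hxC : x = star C
  · refine ⟨w, v, hw, hv, ?_, hvw.symm, hvw ▸ hle⟩
    simp only [hxC, C, star_mul, star_star, mul_assoc]
  · obtain ⟨s, hs, hxs⟩ := exists_conj_eq_of_re_eq hCre (by rw [hx, hC]) hxC
    refine ⟨s * v * star s, s * w * star s, by rw [norm_mul_mul_star hs, hv],
      by rw [norm_mul_mul_star hs, hw], ?_, ?_, ?_⟩
    · rw [hxs, conj_mul_mul_star_mul_star
        (Unitary.star_mul_self_of_mem (mem_unitary_iff_norm_eq_one.2 hs))]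
    · rw [norm_one_sub_mul_mul_star hs, norm_one_sub_mul_mul_star hs, hvw]
    · rw [norm_one_sub_mul_mul_star hs]
      exact hle

def toMatrix : ℍ[ℝ] →⋆ₐ[ℝ] Matrix (Fin 2) (Fin 2) ℂ where
  toFun x := !![⟨x.re, x.imI⟩, ⟨x.imJ, x.imK⟩; ⟨-x.imJ, x.imK⟩, ⟨x.re, -x.imI⟩]
  map_one' := by ext i j; fin_cases i <;> fin_cases j <;> simp [Complex.ext_iff]
  map_mul' x y := by
    ext i j
    fin_cases i <;> fin_cases j <;>
      simp only [Fin.isValue, Fin.zero_eta, Fin.mk_one, re_mul, imI_mul, imJ_mul, imK_mul,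
        of_apply, cons_val', cons_val_zero, cons_val_one, cons_val_fin_one, Matrix.mul_apply,
        Fin.sum_univ_two, Complex.ext_iff, Complex.add_re, Complex.mul_re, Complex.add_im,
        Complex.mul_im] <;>
      constructor <;> ring
  map_zero' := by ext i j; fin_cases i <;> fin_cases j <;> simp [Complex.ext_iff]
  map_add' x y := by
    ext i j; fin_cases i <;> fin_cases j <;> simp [Complex.ext_iff, add_comm]
  commutes' r := by
    ext i j
    fin_cases i <;> fin_cases j <;> simp [Complex.ext_iff, Matrix.algebraMap_eq_diagonal]
  map_star' x := by ext i j; fin_cases i <;> fin_cases j <;> simp [Complex.ext_iff]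

theorem toMatrix_apply (x : ℍ[ℝ]) :
    toMatrix x = !![⟨x.re, x.imI⟩, ⟨x.imJ, x.imK⟩; ⟨-x.imJ, x.imK⟩, ⟨x.re, -x.imI⟩] :=
  rfl

theorem det_toMatrix (x : ℍ[ℝ]) : (toMatrix x).det = normSq x := by
  rw [toMatrix_apply, det_fin_two_of, normSq_def']
  apply Complex.ext <;>
    simp only [sq, Complex.sub_re, Complex.sub_im, Complex.mul_re, Complex.mul_im,
      Complex.ofReal_re, Complex.ofReal_im, Complex.ofReal_add, Complex.ofReal_mul, Complex.add_re,
      Complex.add_im] <;>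
    ring

theorem norm_toMatrix (x : ℍ[ℝ]) : ‖toMatrix x‖ = ‖x‖ := by
  have h := l2_opNorm_conjTranspose_mul_self (toMatrix x)
  rw [← star_eq_conjTranspose, ← map_star, ← map_mul, star_mul_self, ← algebraMap_def,
    AlgHomClass.commutes, IsScalarTower.algebraMap_apply ℝ ℂ, norm_algebraMap',
    norm_algebraMap', Real.norm_of_nonneg normSq_nonneg, normSq_eq_norm_mul_self] at h
  exact (mul_self_inj (norm_nonneg _) (norm_nonneg _)).1 h.symm

theorem norm_one_sub_toMatrix (x : ℍ[ℝ]) : ‖1 - toMatrix x‖ = ‖1 - x‖ := by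
  rw [← map_one toMatrix, ← map_sub, norm_toMatrix]

theorem toMatrix_mem_specialUnitaryGroup {x : ℍ[ℝ]} (hx : ‖x‖ = 1) :
    toMatrix x ∈ specialUnitaryGroup (Fin 2) ℂ :=
  mem_specialUnitaryGroup_iff.2 ⟨Unitary.map_mem toMatrix (mem_unitary_iff_norm_eq_one.2 hx),
    by rw [det_toMatrix, norm_eq_one_iff.1 hx, Complex.ofReal_one]⟩

theorem exists_toMatrix_eq_of_mem_specialUnitaryGroup {U : Matrix (Fin 2) (Fin 2) ℂ}
    (hU : U ∈ specialUnitaryGroup (Fin 2) ℂ) :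
    ∃ x : ℍ[ℝ], ‖x‖ = 1 ∧ toMatrix x = U := by
  obtain ⟨hunit, hdet⟩ := mem_specialUnitaryGroup_iff.1 hU
  have hadj : star U = adjugate U := by
    rw [← inv_eq_left_inv (Unitary.star_mul_self_of_mem hunit), Matrix.inv_def, hdet]
    simp
  rw [adjugate_fin_two] at hadj
  have h00 := congrFun (congrFun hadj 0) 0
  have h10 := congrFun (congrFun hadj 1) 0
  simp only [star_apply, of_apply, cons_val', cons_val_zero, cons_val_one, empty_val',
    cons_val_fin_one] at h00 h10
  have h10' : U 1 0 = -star (U 0 1) := by rw [h10, neg_neg]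
  set x : ℍ[ℝ] := ⟨(U 0 0).re, (U 0 0).im, (U 0 1).re, (U 0 1).im⟩
  have hx : toMatrix x = U := by
    ext i j
    rw [toMatrix_apply]
    fin_cases i <;> fin_cases j <;> simp [x, Complex.ext_iff, ← h00, h10']
  refine ⟨x, ?_, hx⟩
  rw [← norm_toMatrix, hx]
  exact CStarRing.norm_of_mem_unitary hunit

end Quaternion

theorem balanced_group_commutator_decomposition_general
    (U : Matrix (Fin 2) (Fin 2) ℂ)
    (hU : U ∈ Matrix.specialUnitaryGroup (Fin 2) ℂ)
    (ε : ℝ) :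
    (∃ V W : Matrix (Fin 2) (Fin 2) ℂ,
      V ∈ Matrix.specialUnitaryGroup (Fin 2) ℂ ∧
      W ∈ Matrix.specialUnitaryGroup (Fin 2) ℂ ∧
      U = V * W * Vᴴ * Wᴴ) ∧
    (‖(1 : Matrix (Fin 2) (Fin 2) ℂ) - U‖ < ε →
      ∃ V W : Matrix (Fin 2) (Fin 2) ℂ,
        V ∈ Matrix.specialUnitaryGroup (Fin 2) ℂ ∧
        W ∈ Matrix.specialUnitaryGroup (Fin 2) ℂ ∧
        U = V * W * Vᴴ * Wᴴ ∧
        ‖(1 : Matrix (Fin 2) (Fin 2) ℂ) - V‖ = ‖(1 : Matrix (Fin 2) (Fin 2) ℂ) - W‖ ∧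
        ‖(1 : Matrix (Fin 2) (Fin 2) ℂ) - V‖ ≤
          Real.sqrt ‖(1 : Matrix (Fin 2) (Fin 2) ℂ) - U‖ ∧
        Real.sqrt ‖(1 : Matrix (Fin 2) (Fin 2) ℂ) - U‖ < Real.sqrt ε) := by
  obtain ⟨x, hx, rfl⟩ := Quaternion.exists_toMatrix_eq_of_mem_specialUnitaryGroup hU
  obtain ⟨v, w, hv, hw, rfl, hvw, hle⟩ := Quaternion.exists_balanced_commutator hx
  set V := Quaternion.toMatrix v
  set W := Quaternion.toMatrix w
  have hcomm : Quaternion.toMatrix (v * w * star v * star w) = V * W * Vᴴ * Wᴴ := by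
    simp only [map_mul, map_star, V, W, star_eq_conjTranspose]
  have hV := Quaternion.toMatrix_mem_specialUnitaryGroup hv
  have hW := Quaternion.toMatrix_mem_specialUnitaryGroup hw
  refine ⟨⟨V, W, hV, hW, hcomm⟩, fun hlt => ⟨V, W, hV, hW, hcomm, ?_, ?_, ?_⟩⟩
  · rw [Quaternion.norm_one_sub_toMatrix, Quaternion.norm_one_sub_toMatrix, hvw]
  · rw [Quaternion.norm_one_sub_toMatrix, Quaternion.norm_one_sub_toMatrix]
    exact hle
  · exact Real.sqrt_lt_sqrt (norm_nonneg _) hlt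

theorem balanced_group_commutator_decomposition
    (U : Matrix (Fin 2) (Fin 2) ℂ)
    (hU : U ∈ Matrix.specialUnitaryGroup (Fin 2) ℂ)
    (ε : ℝ) (hε : 0 < ε) (hε1 : ε ≤ 1) :
    (∃ V W : Matrix (Fin 2) (Fin 2) ℂ,
      V ∈ Matrix.specialUnitaryGroup (Fin 2) ℂ ∧
      W ∈ Matrix.specialUnitaryGroup (Fin 2) ℂ ∧
      U = V * W * Vᴴ * Wᴴ) ∧
    (‖(1 : Matrix (Fin 2) (Fin 2) ℂ) - U‖ < ε →
      ∃ V W : Matrix (Fin 2) (Fin 2) ℂ,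
        V ∈ Matrix.specialUnitaryGroup (Fin 2) ℂ ∧
        W ∈ Matrix.specialUnitaryGroup (Fin 2) ℂ ∧
        U = V * W * Vᴴ * Wᴴ ∧
        ‖(1 : Matrix (Fin 2) (Fin 2) ℂ) - V‖ = ‖(1 : Matrix (Fin 2) (Fin 2) ℂ) - W‖ ∧
        ‖(1 : Matrix (Fin 2) (Fin 2) ℂ) - V‖ ≤
          Real.sqrt ‖(1 : Matrix (Fin 2) (Fin 2) ℂ) - U‖ ∧
        Real.sqrt ‖(1 : Matrix (Fin 2) (Fin 2) ℂ) - U‖ < Real.sqrt ε) :=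
  balanced_group_commutator_decomposition_general U hU ε
end

section
/- Suppose unitaries satisfy ‖V_n − V‖ < ε, ‖W_n − W‖ < ε, ‖VWV†W† − Δ‖ < c'·ε^{3/2}, and ‖I − V‖, ‖I − W‖ < c''·√ε with ε ≤ 1. Then ‖V_n W_n V_n† W_n† − Δ‖ < (c' + 8c'' + 4c''ε + 8√ε + 4ε + ε^{3/2})·ε^{3/2}. -/
open scoped Matrix.Norms.L2Operator
open Matrix

/-!
Write `K(u, v) = u v u⋆ v⋆` for the group commutator of unitaries. Since `v u u⋆ v⋆ = 1`, the
group commutator differs from `1` by the ring commutator `u v - v u` times the unitary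
`(v u)⋆`. Comparing `K(u', v')` with `K(u, v)` therefore splits into the change of the ring
commutator, which is bilinear and hence of size `ε (ε + δ) + δ ε` when `u', v'` are `ε`-close to
`u, v` and `u, v` are `δ`-close to `1`, and the change of `(v u)⋆`, of size `2 ε`, weighted by
`‖u v - v u‖ ≤ 2 δ`. For `δ = c'' √ε` this is `O(ε ^ (3/2))`, and the triangle inequality
through `K(u, v)` gives the theorem.
-/

section NormedRing

variable {A : Type*} [NormedRing A]

theorem norm_mul_sub_mul_comm_le (a b : A) : ‖a * b - b * a‖ ≤ 2 * ‖a‖ * ‖b‖ := by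
  calc ‖a * b - b * a‖ ≤ ‖a‖ * ‖b‖ + ‖b‖ * ‖a‖ :=
        (norm_sub_le _ _).trans (add_le_add (norm_mul_le _ _) (norm_mul_le _ _))
    _ = 2 * ‖a‖ * ‖b‖ := by ring

theorem norm_commutator_sub_commutator_le (a b a' b' : A) :
    ‖(a' * b' - b' * a') - (a * b - b * a)‖ ≤
      2 * ‖a' - a‖ * ‖b' - 1‖ + 2 * ‖a - 1‖ * ‖b' - b‖ := by
  have h : (a' * b' - b' * a') - (a * b - b * a) =
      ((a' - a) * (b' - 1) - (b' - 1) * (a' - a)) + ((a - 1) * (b' - b) - (b' - b) * (a - 1)) := by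
    noncomm_ring
  rw [h]
  exact (norm_add_le _ _).trans
    (add_le_add (norm_mul_sub_mul_comm_le _ _) (norm_mul_sub_mul_comm_le _ _))

end NormedRing

theorem mul_mul_star_mul_star_sub_one {R : Type*} [Ring R] [StarRing R] {u v : R}
    (hu : u ∈ unitary R) (hv : v ∈ unitary R) :
    u * v * star u * star v - 1 = (u * v - v * u) * star (v * u) := by
  have hvu : v * u * star (v * u) = 1 := Unitary.mul_star_self_of_mem (mul_mem hv hu)
  rw [sub_mul, hvu, star_mul, ← mul_assoc]

section CStarRing

variable {A : Type*} [NormedRing A] [StarRing A] [CStarRing A]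

theorem norm_mul_sub_mul_le_of_mem_unitary {u v u' v' : A} (hu' : u' ∈ unitary A)
    (hv : v ∈ unitary A) : ‖v' * u' - v * u‖ ≤ ‖v' - v‖ + ‖u' - u‖ := by
  have h : v' * u' - v * u = (v' - v) * u' + v * (u' - u) := by noncomm_ring
  rw [h, ← CStarRing.norm_mul_mem_unitary (v' - v) hu', ← CStarRing.norm_mem_unitary_mul (u' - u) hv]
  exact norm_add_le _ _

theorem norm_mul_sub_mul_comm_le_of_mem_unitary {u v : A} (hv : v ∈ unitary A) :
    ‖u * v - v * u‖ ≤ 2 * ‖1 - u‖ := by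
  have h : u * v - v * u = (u - 1) * v - v * (u - 1) := by noncomm_ring
  rw [h, norm_sub_rev 1 u]
  calc ‖(u - 1) * v - v * (u - 1)‖ ≤ ‖(u - 1) * v‖ + ‖v * (u - 1)‖ := norm_sub_le _ _
    _ = 2 * ‖u - 1‖ := by
      rw [CStarRing.norm_mul_mem_unitary _ hv, CStarRing.norm_mem_unitary_mul _ hv]; ring

theorem norm_groupCommutator_sub_groupCommutator_le {u v u' v' : A} (hu : u ∈ unitary A)
    (hv : v ∈ unitary A) (hu' : u' ∈ unitary A) (hv' : v' ∈ unitary A) {ε δ : ℝ}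
    (hu'u : ‖u' - u‖ ≤ ε) (hv'v : ‖v' - v‖ ≤ ε) (hu1 : ‖1 - u‖ ≤ δ) (hv1 : ‖1 - v‖ ≤ δ) :
    ‖u' * v' * star u' * star v' - u * v * star u * star v‖ ≤ 2 * ε ^ 2 + 8 * δ * ε := by
  set B := u * v - v * u
  set B' := u' * v' - v' * u'
  have hsplit : u' * v' * star u' * star v' - u * v * star u * star v =
      (B' - B) * star (v' * u') + B * (star (v' * u') - star (v * u)) := by
    rw [← sub_sub_sub_cancel_right _ (u * v * star u * star v) 1,
      mul_mul_star_mul_star_sub_one hu' hv', mul_mul_star_mul_star_sub_one hu hv]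
    simp only [B, B']
    noncomm_ring
  have hv'1 : ‖v' - 1‖ ≤ ε + δ := by
    have htri := norm_sub_le_norm_sub_add_norm_sub v' v 1
    rw [norm_sub_rev v 1] at htri
    linarith
  have hB'B : ‖B' - B‖ ≤ 2 * ε * (ε + δ) + 2 * δ * ε := by
    have hbilin := norm_commutator_sub_commutator_le u v u' v'
    rw [norm_sub_rev u 1] at hbilin
    have hfirst := mul_le_mul hu'u hv'1 (norm_nonneg _) ((norm_nonneg _).trans hu'u)
    have hsecond := mul_le_mul hu1 hv'v (norm_nonneg _) ((norm_nonneg _).trans hu1)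
    linarith
  have hB : ‖B‖ ≤ 2 * δ := (norm_mul_sub_mul_comm_le_of_mem_unitary hv).trans (by linarith)
  have hstar : ‖star (v' * u') - star (v * u)‖ ≤ 2 * ε := by
    rw [← star_sub, norm_star]
    exact (norm_mul_sub_mul_le_of_mem_unitary hu' hv).trans (by linarith)
  rw [hsplit]
  calc ‖(B' - B) * star (v' * u') + B * (star (v' * u') - star (v * u))‖
      ≤ ‖(B' - B) * star (v' * u')‖ + ‖B * (star (v' * u') - star (v * u))‖ := norm_add_le _ _
    _ ≤ ‖B' - B‖ + ‖B‖ * ‖star (v' * u') - star (v * u)‖ := by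
        rw [CStarRing.norm_mul_mem_unitary _ (Unitary.star_mem (mul_mem hv' hu'))]
        exact add_le_add le_rfl (norm_mul_le _ _)
    _ ≤ 2 * ε * (ε + δ) + 2 * δ * ε + 2 * δ * (2 * ε) :=
        add_le_add hB'B (mul_le_mul hB hstar (norm_nonneg _) ((norm_nonneg _).trans hB))
    _ = 2 * ε ^ 2 + 8 * δ * ε := by ring

end CStarRing

theorem qudit_commutator_accuracy_general {d : ℕ}
    (V W Vn Wn Δ : Matrix (Fin d) (Fin d) ℂ)
    (hV : V ∈ Matrix.unitaryGroup (Fin d) ℂ)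
    (hW : W ∈ Matrix.unitaryGroup (Fin d) ℂ)
    (hVn : Vn ∈ Matrix.unitaryGroup (Fin d) ℂ)
    (hWn : Wn ∈ Matrix.unitaryGroup (Fin d) ℂ)
    (ε c' c'' : ℝ)
    (h1 : ‖Vn - V‖ < ε) (h2 : ‖Wn - W‖ < ε)
    (h3 : ‖V * W * Vᴴ * Wᴴ - Δ‖ < c' * ε ^ ((3 : ℝ) / 2))
    (h4 : ‖(1 : Matrix (Fin d) (Fin d) ℂ) - V‖ < c'' * Real.sqrt ε)
    (h5 : ‖(1 : Matrix (Fin d) (Fin d) ℂ) - W‖ < c'' * Real.sqrt ε) :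
    ‖Vn * Wn * Vnᴴ * Wnᴴ - Δ‖ <
      (c' + 8 * c'' + 4 * c'' * ε + 8 * Real.sqrt ε + 4 * ε + ε ^ ((3 : ℝ) / 2)) *
        ε ^ ((3 : ℝ) / 2) := by
  have hε : 0 < ε := (norm_nonneg _).trans_lt h1
  have hδ : 0 < c'' * Real.sqrt ε := (norm_nonneg _).trans_lt h4
  have hperturb := norm_groupCommutator_sub_groupCommutator_le hV hW hVn hWn h1.le h2.le h4.le h5.le
  simp only [star_eq_conjTranspose] at hperturb
  have htri := norm_sub_le_norm_sub_add_norm_sub (Vn * Wn * Vnᴴ * Wnᴴ) (V * W * Vᴴ * Wᴴ) Δ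
  set s := Real.sqrt ε
  have hs : 0 < s := Real.sqrt_pos.mpr hε
  have hε_eq : ε = s ^ 2 := (Real.sq_sqrt hε.le).symm
  have hpow : ε ^ ((3 : ℝ) / 2) = s ^ 3 := by
    rw [show (3 : ℝ) / 2 = 1 / 2 * 3 by norm_num, Real.rpow_mul hε.le, ← Real.sqrt_eq_rpow]
    norm_cast
  rw [hpow] at h3 ⊢
  rw [hε_eq] at hperturb ⊢
  nlinarith [pow_pos hs 5, pow_pos hs 6, mul_pos hδ (pow_pos hs 3)]

theorem qudit_commutator_accuracy {d : ℕ}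
    (V W Vn Wn Δ : Matrix (Fin d) (Fin d) ℂ)
    (hV : V ∈ Matrix.unitaryGroup (Fin d) ℂ)
    (hW : W ∈ Matrix.unitaryGroup (Fin d) ℂ)
    (hVn : Vn ∈ Matrix.unitaryGroup (Fin d) ℂ)
    (hWn : Wn ∈ Matrix.unitaryGroup (Fin d) ℂ)
    (hΔ : Δ ∈ Matrix.unitaryGroup (Fin d) ℂ)
    (ε c' c'' : ℝ) (hε : 0 < ε) (hε1 : ε ≤ 1) (hc' : 0 < c') (hc'' : 0 < c'')
    (h1 : ‖Vn - V‖ < ε) (h2 : ‖Wn - W‖ < ε)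
    (h3 : ‖V * W * Vᴴ * Wᴴ - Δ‖ < c' * ε ^ ((3 : ℝ) / 2))
    (h4 : ‖(1 : Matrix (Fin d) (Fin d) ℂ) - V‖ < c'' * Real.sqrt ε)
    (h5 : ‖(1 : Matrix (Fin d) (Fin d) ℂ) - W‖ < c'' * Real.sqrt ε) :
    ‖Vn * Wn * Vnᴴ * Wnᴴ - Δ‖ <
      (c' + 8 * c'' + 4 * c'' * ε + 8 * Real.sqrt ε + 4 * ε + ε ^ ((3 : ℝ) / 2)) *
        ε ^ ((3 : ℝ) / 2) :=
  qudit_commutator_accuracy_general V W Vn Wn Δ hV hW hVn hWn ε c' c'' h1 h2 h3 h4 h5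
end
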